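/- Let P, X, Y be real Banach spaces, K ⊆ Y a pointed closed convex cone, f : P × X → Y a K-convex and K-closed map, and C : P ⇉ X a closed convex set-valued map. Let (p̄, x̄) ∈ gph S^ρ with ȳ = f(p̄, x̄), and H : P ⇉ P × X given by H(p) = {p} × C(p). Assume (i) ℝ⁺(rge H − dom f) is a closed linear subspace of P × X, (ii) ℝ⁺(P − dom C) is a closed linear subspace of P, and (iii) F is K-dominated by 𝓟 near p̄, i.e., F(p) ⊆ 𝓟(p) + K for all p in some neighborhood of p̄. Then for every y* ∈ Y*, D̂*(𝓟 + K)(p̄, ȳ)(y*) = ⋃_{(p*, x*) ∈ D*(f + K)(p̄, x̄)(y*)} {p* + q* : q* ∈ D*C(p̄, x̄)(x*)}; in particular, for every y* ∈ K*, D̂*(𝓟 + K)(p̄, ȳ)(y*) = ⋃_{(p*, x*) ∈ ∂⟨y*, f⟩(p̄, x̄)} {p* + q* : q* ∈ D*C(p̄, x̄)(x*)}. -/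

import Mathlib

open Set Pointwise Topology Filter

/-- The graph of a set-valued map. -/
def gph {α β : Type*} (H : α → Set β) : Set (α × β) := {q | q.2 ∈ H q.1}

/-- The domain of a set-valued map. -/
def dom {α β : Type*} (H : α → Set β) : Set α := {a | (H a).Nonempty}

/-- The coderivative (in the sense of convex analysis) of a set-valued map `H` at
`(a, b) ∈ gph H`:  `φ ∈ coderiv H a b ψ` iff `(φ, -ψ) ∈ N((a,b), gph H)`, that is,
`⟨φ, u - a⟩ - ⟨ψ, v - b⟩ ≤ 0` for all `(u, v) ∈ gph H`. -/
def coderiv {α β : Type*} [NormedAddCommGroup α] [NormedSpace ℝ α]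
    [NormedAddCommGroup β] [NormedSpace ℝ β]
    (H : α → Set β) (a : α) (b : β) (ψ : β →L[ℝ] ℝ) : Set (α →L[ℝ] ℝ) :=
  {φ | ∀ u : α, ∀ v ∈ H u, φ (u - a) - ψ (v - b) ≤ 0}

/-- The Fréchet coderivative of a set-valued map `H` at `(a, b) ∈ gph H`, with the sum
norm `‖(u,v)‖ = ‖u‖ + ‖v‖` on the product:  `φ ∈ fCoderiv H a b ψ` iff
`(φ, -ψ) ∈ N̂((a,b), gph H)`, the Fréchet normal cone, expressed by its standard
`ε`–`δ` characterization. -/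
def fCoderiv {α β : Type*} [NormedAddCommGroup α] [NormedSpace ℝ α]
    [NormedAddCommGroup β] [NormedSpace ℝ β]
    (H : α → Set β) (a : α) (b : β) (ψ : β →L[ℝ] ℝ) : Set (α →L[ℝ] ℝ) :=
  {φ | ∀ ε > (0:ℝ), ∃ δ > (0:ℝ), ∀ u : α, ∀ v ∈ H u, ‖u - a‖ + ‖v - b‖ < δ →
      φ (u - a) - ψ (v - b) ≤ ε * (‖u - a‖ + ‖v - b‖)}

/-- The subdifferential (in the sense of convex analysis) of `g : α → ℝ` at `a`. -/
def subdiff {α : Type*} [NormedAddCommGroup α] [NormedSpace ℝ α]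
    (g : α → ℝ) (a : α) : Set (α →L[ℝ] ℝ) :=
  {φ | ∀ u : α, φ (u - a) ≤ g u - g a}

open Metric

/-!
Near `p̄` the profile `𝓟 + K` coincides with `F + K` by `K`-domination, and `F + K` has convex
graph, so its Fréchet coderivative is the convex-analysis one. An element `w` of the latter
forces `y* ∈ K*`, and `(w, 0)` is a subgradient of `⟨y*, f⟩ + δ_{gph C}` at `(p̄, x̄)`. The sum
rule `∂(g + δ_{gph C}) ⊆ ∂g + N(gph C)` splits it as required; it applies because
`g = ⟨y*, f⟩` is convex and finite everywhere, and bounded above on some ball by the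
Baire-category argument of the Robinson–Ursescu theorem applied to the closed convex graph of
`f + K`, hence continuous.
-/

section SetValued

variable {α β : Type*} [NormedAddCommGroup α] [NormedSpace ℝ α]
  [NormedAddCommGroup β] [NormedSpace ℝ β]

lemma fCoderiv_subset_of_eventuallyEq {H₁ H₂ : α → Set β} {a : α} (h : H₁ =ᶠ[𝓝 a] H₂)
    (b : β) (ψ : β →L[ℝ] ℝ) : fCoderiv H₁ a b ψ ⊆ fCoderiv H₂ a b ψ := by
  intro φ hφ ε hε
  obtain ⟨δ, hδ, hφδ⟩ := hφ ε hε
  obtain ⟨r, hr, hball⟩ := Metric.eventually_nhds_iff.1 h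
  refine ⟨min δ r, lt_min hδ hr, fun u v hv huv => ?_⟩
  have hua : dist u a < r := by
    rw [dist_eq_norm]; linarith [norm_nonneg (v - b), min_le_right δ r]
  exact hφδ u v (hball hua ▸ hv) (huv.trans_le (min_le_left δ r))

lemma fCoderiv_congr_of_eventuallyEq {H₁ H₂ : α → Set β} {a : α} (h : H₁ =ᶠ[𝓝 a] H₂)
    (b : β) (ψ : β →L[ℝ] ℝ) : fCoderiv H₁ a b ψ = fCoderiv H₂ a b ψ :=
  (fCoderiv_subset_of_eventuallyEq h b ψ).antisymm (fCoderiv_subset_of_eventuallyEq h.symm b ψ)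

lemma coderiv_subset_fCoderiv (H : α → Set β) (a : α) (b : β) (ψ : β →L[ℝ] ℝ) :
    coderiv H a b ψ ⊆ fCoderiv H a b ψ :=
  fun _ hφ _ hε => ⟨1, one_pos, fun u v hv _ => (hφ u v hv).trans (by positivity)⟩

lemma fCoderiv_eq_coderiv_of_convex {H : α → Set β} (hH : Convex ℝ (gph H)) {a : α} {b : β}
    (hb : b ∈ H a) (ψ : β →L[ℝ] ℝ) : fCoderiv H a b ψ = coderiv H a b ψ := by
  refine Subset.antisymm (fun φ hφ u v hv => ?_) (coderiv_subset_fCoderiv H a b ψ)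
  set s := ‖u - a‖ + ‖v - b‖
  have hs : 0 ≤ s := by positivity
  -- Moving towards `(u, v)` along the segment scales both sides of the inequality by `t`.
  have hscaled : ∀ ε > (0 : ℝ), φ (u - a) - ψ (v - b) ≤ ε * s := by
    intro ε hε
    obtain ⟨δ, hδ, hφδ⟩ := hφ ε hε
    set t := min 1 (δ / (s + 1))
    have ht : 0 < t := lt_min one_pos (by positivity)
    have hts : t * s < δ := by
      calc t * s ≤ δ / (s + 1) * s := by gcongr; exact min_le_right _ _
        _ < δ := by rw [div_mul_eq_mul_div, div_lt_iff₀ (by positivity)]; nlinarith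
    have hmem : ((a, b) + t • ((u, v) - (a, b)) : α × β) ∈ gph H :=
      hH.add_smul_sub_mem (show (a, b) ∈ gph H from hb) hv ⟨ht.le, min_le_left _ _⟩
    have key := hφδ (a + t • (u - a)) (b + t • (v - b)) hmem
    simp only [add_sub_cancel_left, norm_smul, Real.norm_of_nonneg ht.le, map_smul,
      smul_eq_mul, ← mul_add] at key
    nlinarith [key hts]
  refine le_of_forall_pos_le_add fun ε hε => ?_
  have hεs : ε / (s + 1) * s ≤ ε := by
    rw [div_mul_eq_mul_div, div_le_iff₀ (by positivity)]; nlinarith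
  linarith [hscaled (ε / (s + 1)) (by positivity)]

lemma nonneg_of_mem_coderiv_add {H : α → Set β} {K : Set β} {a : α} {b : β} (hb : b ∈ H a)
    {ψ : β →L[ℝ] ℝ} {φ : α →L[ℝ] ℝ} (hφ : φ ∈ coderiv (fun a => H a + K) a b ψ) :
    ∀ k ∈ K, 0 ≤ ψ k := by
  intro k hk
  simpa using hφ a (b + k) (add_mem_add hb hk)

end SetValued

section ConvexAnalysis

variable {E : Type*} [NormedAddCommGroup E] [NormedSpace ℝ E] {g : E → ℝ}

lemma ConvexOn.continuous_of_isBoundedUnder_le (hg : ConvexOn ℝ univ g) {z₀ : E}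
    (h : (𝓝 z₀).IsBoundedUnder (· ≤ ·) g) : Continuous g := by
  have := (hg.continuousOn_tfae isOpen_univ univ_nonempty).out 3 1
  exact continuousOn_univ.1 (this.1 ⟨z₀, mem_univ _, h⟩)

lemma ConvexOn.convex_strictEpigraph (hg : ConvexOn ℝ univ g) :
    Convex ℝ {q : E × ℝ | g q.1 < q.2} := by
  intro q₁ hq₁ q₂ hq₂ a b ha hb hab
  have hle := hg.2 (mem_univ q₁.1) (mem_univ q₂.1) ha hb hab
  simp only [smul_eq_mul, mem_ofPred_eq, Prod.fst_add, Prod.snd_add, Prod.smul_fst,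
    Prod.smul_snd] at hle hq₁ hq₂ ⊢
  rcases ha.eq_or_lt with rfl | ha
  · obtain rfl : b = 1 := by simpa using hab
    simpa using hq₂
  · nlinarith [mul_le_mul_of_nonneg_left hq₂.le hb]

/-- Subgradient sum rule `∂(g + δ_C)(z̄) ⊆ ∂g(z̄) + N(z̄, C)` for continuous convex `g`. -/
lemma exists_mem_subdiff_sub_mem_normal (hg : ConvexOn ℝ univ g) (hgc : Continuous g)
    {C : Set E} (hC : Convex ℝ C) {zb : E} (hzb : zb ∈ C) (φ : E →L[ℝ] ℝ)
    (hφ : ∀ z ∈ C, φ (z - zb) ≤ g z - g zb) :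
    ∃ ν ∈ subdiff g zb, ∀ z ∈ C, (φ - ν) (z - zb) ≤ 0 := by
  -- Separate the strict epigraph of `g` from the graph of `g zb + φ (· - zb)` over `C`.
  set T : Set (E × ℝ) := {q | q.1 ∈ C ∧ q.2 - φ q.1 = g zb - φ zb}
  have hT : Convex ℝ T := by
    rintro q₁ ⟨hq₁, e₁⟩ q₂ ⟨hq₂, e₂⟩ a b ha hb hab
    refine ⟨hC hq₁ hq₂ ha hb hab, ?_⟩
    simp only [Prod.fst_add, Prod.snd_add, Prod.smul_fst, Prod.smul_snd, smul_eq_mul,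
      map_add, map_smul]
    linear_combination a * e₁ + b * e₂ + (g zb - φ zb) * hab
  have hdisj : Disjoint {q : E × ℝ | g q.1 < q.2} T := by
    refine disjoint_left.2 fun q hlt ⟨hq, hqT⟩ => (hφ q.1 hq).not_gt ?_
    simp only [mem_ofPred_eq, map_sub] at hlt ⊢
    linarith
  obtain ⟨Λ, u, hΛU, hΛT⟩ := geometric_hahn_banach_open hg.convex_strictEpigraph
    (isOpen_lt (hgc.comp continuous_fst) continuous_snd) hT hdisj
  set ν₀ := Λ.comp (.inl ℝ E ℝ)
  set β := Λ (0, 1)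
  have hΛ : ∀ z t, Λ (z, t) = ν₀ z + t * β := fun z t => by
    rw [show (z, t) = (z, (0 : ℝ)) + t • ((0 : E), (1 : ℝ)) by simp, map_add, map_smul,
      smul_eq_mul]
    rfl
  have hU : ∀ z, ∀ s > (0 : ℝ), ν₀ z + (g z + s) * β < u := fun z s hs =>
    hΛ z _ ▸ hΛU (z, g z + s) (by simp only [mem_ofPred_eq]; linarith)
  have hTz : ∀ z ∈ C, u ≤ ν₀ z + (g zb + φ (z - zb)) * β := fun z hz =>
    hΛ z _ ▸ hΛT (z, _) ⟨hz, by rw [map_sub]; ring⟩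
  have hupper : ∀ z, ν₀ z + g z * β ≤ u := fun z => by
    have hlim : Tendsto (fun s => ν₀ z + (g z + s) * β) (𝓝[>] 0) (𝓝 (ν₀ z + g z * β)) :=
      ((by fun_prop : Continuous fun s => ν₀ z + (g z + s) * β).tendsto' 0 _
        (by simp)).mono_left nhdsWithin_le_nhds
    exact le_of_tendsto hlim (eventually_nhdsWithin_of_forall fun s hs => (hU z s hs).le)
  have hzb' := hTz zb hzb
  simp only [sub_self, map_zero, add_zero] at hzb'
  have hβ : 0 < -β := by linarith [hU zb 1 one_pos]
  refine ⟨(-β)⁻¹ • ν₀, fun z => ?_, fun z hz => ?_⟩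
  · rw [smul_apply, smul_eq_mul, inv_mul_le_iff₀ hβ, map_sub]
    linarith [hupper z]
  · have hz' := hTz z hz
    rw [sub_apply, smul_apply, smul_eq_mul, sub_nonpos, le_inv_mul_iff₀ hβ]
    simp only [map_sub] at hz' ⊢
    linarith [hupper zb]

end ConvexAnalysis

section BoundedSelection

variable {Z Y : Type*} [NormedAddCommGroup Z] [NormedSpace ℝ Z]
  [NormedAddCommGroup Y] [NormedSpace ℝ Y]
  {B : Set (Z × Y)} {M : ℝ} {c : Z} {r : ℝ}

lemma exists_mem_fst_closer (hBc : Convex ℝ B) (hM : ∀ q ∈ B, ‖q.2‖ ≤ M)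
    (h : ball c r ⊆ closure (Prod.fst '' B)) {z : Z} (hz : z ∈ ball c (r / 2))
    {p : Z × Y} (hp : p ∈ B) {t : ℝ} (ht₀ : 0 < t) (ht₁ : t ≤ 1)
    (hpz : ‖p.1 - z‖ ≤ r / 4 * t) :
    ∃ q ∈ B, ‖q.1 - z‖ ≤ r / 4 * (t / 2) ∧ ‖q.2 - p.2‖ ≤ 2 * M * t := by
  have hr : 0 < r := by linarith [nonempty_ball.1 ⟨z, hz⟩]
  -- `z` is the point at parameter `t` on the segment from `p.1` to `w`.
  set w := p.1 + t⁻¹ • (z - p.1)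
  have hw : w ∈ ball c r := by
    rw [mem_ball_iff_norm] at hz ⊢
    have hscaled : ‖t⁻¹ • (z - p.1)‖ ≤ r / 4 := by
      rw [norm_smul, norm_inv, Real.norm_of_nonneg ht₀.le, norm_sub_rev, inv_mul_le_iff₀ ht₀]
      linarith
    calc ‖w - c‖ = ‖(p.1 - z) + (z - c) + t⁻¹ • (z - p.1)‖ := by simp only [w]; abel_nf
      _ ≤ ‖p.1 - z‖ + ‖z - c‖ + ‖t⁻¹ • (z - p.1)‖ := norm_add₃_le
      _ < r := by nlinarith [mul_le_mul_of_nonneg_left ht₁ hr.le]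
  obtain ⟨a, ⟨⟨a', y⟩, hay, rfl⟩, hwa⟩ :=
    Metric.mem_closure_iff.1 (h hw) (r / 8) (by positivity)
  refine ⟨(1 - t) • p + t • (a', y), hBc hp hay (by linarith) ht₀.le (by ring), ?_, ?_⟩
  · have hfst : ((1 - t) • p + t • (a', y)).1 - z = t • (a' - w) := by
      simp only [Prod.fst_add, Prod.smul_fst, w, smul_sub, smul_add, smul_smul,
        mul_inv_cancel₀ ht₀.ne', one_smul]
      module
    rw [hfst, norm_smul, Real.norm_of_nonneg ht₀.le, ← dist_eq_norm, dist_comm]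
    nlinarith
  · have hsnd : ((1 - t) • p + t • (a', y)).2 - p.2 = t • (y - p.2) := by
      simp only [Prod.snd_add, Prod.smul_snd]
      module
    rw [hsnd, norm_smul, Real.norm_of_nonneg ht₀.le]
    nlinarith [hM _ hay, hM _ hp, norm_sub_le y p.2]

lemma ball_subset_fst_image_of_ball_subset_closure [CompleteSpace Y] (hBcl : IsClosed B)
    (hBc : Convex ℝ B) (hM : ∀ q ∈ B, ‖q.2‖ ≤ M) (h : ball c r ⊆ closure (Prod.fst '' B)) :
    ball c (r / 2) ⊆ Prod.fst '' B := by
  intro z hz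
  have hr : 0 < r := by linarith [nonempty_ball.1 ⟨z, hz⟩]
  set I : ℕ → Z × Y → Prop := fun n p => p ∈ B ∧ ‖p.1 - z‖ ≤ r / 4 * (1 / 2) ^ n
  obtain ⟨_, ⟨p₀, hp₀, rfl⟩, hp₀z⟩ := Metric.mem_closure_iff.1
    (h (ball_subset_ball (by linarith) hz)) (r / 4) (by positivity)
  have h₀ : I 0 p₀ := ⟨hp₀, by rw [← dist_eq_norm, dist_comm]; simpa using hp₀z.le⟩
  have hstep : ∀ n p, I n p → ∃ q, I (n + 1) q ∧ ‖q.2 - p.2‖ ≤ 2 * M * (1 / 2) ^ n := by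
    rintro n p ⟨hp, hpz⟩
    obtain ⟨q, hq, hqz, hqp⟩ :=
      exists_mem_fst_closer hBc hM h hz hp (by positivity) (pow_le_one₀ (by norm_num)
        (by norm_num)) hpz
    exact ⟨q, ⟨hq, by rwa [pow_succ, ← div_eq_mul_one_div]⟩, hqp⟩
  choose! next hnext using hstep
  let u : ℕ → Z × Y := fun n => Nat.rec p₀ next n
  have hu : ∀ n, I n (u n) := fun n => by
    induction n with
    | zero => exact h₀
    | succ n ih => exact (hnext n _ ih).1
  have hcauchy : CauchySeq fun n => (u n).2 := by
    refine cauchySeq_of_le_geometric (1 / 2) (2 * M) (by norm_num) fun n => ?_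
    rw [dist_comm, dist_eq_norm]
    exact (hnext n _ (hu n)).2
  obtain ⟨y, hy⟩ := cauchySeq_tendsto_of_complete hcauchy
  have hfst : Tendsto (fun n => (u n).1) atTop (𝓝 z) := by
    rw [tendsto_iff_norm_sub_tendsto_zero]
    refine squeeze_zero (fun _ => norm_nonneg _) (fun n => (hu n).2) ?_
    simpa using (tendsto_pow_atTop_nhds_zero_of_lt_one (by norm_num : (0 : ℝ) ≤ 1 / 2)
      (by norm_num)).const_mul (r / 4)
  exact ⟨(z, y), hBcl.mem_of_tendsto (hfst.prodMk_nhds hy) (.of_forall fun n => (hu n).1), rfl⟩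

lemma exists_ball_forall_exists_norm_le [CompleteSpace Z] [CompleteSpace Y]
    {A : Set (Z × Y)} (hAcl : IsClosed A) (hAc : Convex ℝ A) (hA : ∀ z, ∃ y, (z, y) ∈ A) :
    ∃ c, ∃ r > 0, ∃ M, ∀ z ∈ ball c r, ∃ y, (z, y) ∈ A ∧ ‖y‖ ≤ M := by
  set D : ℕ → Set (Z × Y) := fun n => A ∩ univ ×ˢ closedBall 0 n
  have hcover : ⋃ n, closure (Prod.fst '' D n) = univ := by
    refine eq_univ_of_forall fun z => ?_
    obtain ⟨y, hy⟩ := hA z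
    obtain ⟨n, hn⟩ := exists_nat_ge ‖y‖
    exact mem_iUnion.2 ⟨n, subset_closure ⟨(z, y), ⟨hy, mem_univ z, by simpa using hn⟩, rfl⟩⟩
  obtain ⟨N, c, hc⟩ := nonempty_interior_of_iUnion_of_closed (fun _ => isClosed_closure) hcover
  obtain ⟨r, hr, hball⟩ := isOpen_iff.1 isOpen_interior c hc
  have hD := ball_subset_fst_image_of_ball_subset_closure
    (hAcl.inter (isClosed_univ.prod isClosed_closedBall)) (hAc.inter (convex_univ.prod
      (convex_closedBall 0 N))) (fun q hq => by simpa using hq.2.2)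
    (hball.trans interior_subset)
  refine ⟨c, r / 2, by positivity, N, fun z hz => ?_⟩
  obtain ⟨⟨_, y⟩, ⟨hy, -, hyN⟩, rfl⟩ := hD hz
  exact ⟨y, hy, by simpa using hyN⟩

end BoundedSelection

lemma mem_singleton_add_iff {G : Type*} [Add G] {K : Set G} {g v : G} :
    v ∈ ({g} : Set G) + K ↔ ∃ k ∈ K, g + k = v := by
  simp only [singleton_add, mem_image]

lemma mem_singleton_add_self {G : Type*} [AddZeroClass G] {K : Set G} (h0K : (0 : G) ∈ K)
    (g : G) : g ∈ ({g} : Set G) + K :=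
  mem_singleton_add_iff.2 ⟨0, h0K, add_zero g⟩

section ConeConvexMaps

variable {α Y : Type*} [NormedAddCommGroup α] [NormedSpace ℝ α]
  [NormedAddCommGroup Y] [NormedSpace ℝ Y]
  {K : Set Y} {f : α → Y} {ψ : Y →L[ℝ] ℝ}

lemma convexOn_comp_of_convex_gph (h0K : (0 : Y) ∈ K) (hψK : ∀ k ∈ K, 0 ≤ ψ k)
    (hf : Convex ℝ (gph fun a => ({f a} : Set Y) + K)) : ConvexOn ℝ univ fun a => ψ (f a) := by
  refine ⟨convex_univ, fun z₁ _ z₂ _ a b ha hb hab => ?_⟩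
  have hmem := hf (show (z₁, f z₁) ∈ gph _ from mem_singleton_add_self h0K (f z₁))
    (show (z₂, f z₂) ∈ gph _ from mem_singleton_add_self h0K (f z₂)) ha hb hab
  obtain ⟨k, hk, hkeq⟩ := mem_singleton_add_iff.1 hmem
  have hψk := congrArg ψ hkeq
  simp only [Prod.fst_add, Prod.snd_add, Prod.smul_fst, Prod.smul_snd, map_add, map_smul,
    smul_eq_mul] at hψk
  show ψ (f (a • z₁ + b • z₂)) ≤ a * ψ (f z₁) + b * ψ (f z₂)
  linarith [hψK k hk]

lemma continuous_comp_of_isClosed_gph [CompleteSpace α] [CompleteSpace Y] (h0K : (0 : Y) ∈ K)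
    (hψK : ∀ k ∈ K, 0 ≤ ψ k) (hfconv : Convex ℝ (gph fun a => ({f a} : Set Y) + K))
    (hfcl : IsClosed (gph fun a => ({f a} : Set Y) + K)) : Continuous fun a => ψ (f a) := by
  obtain ⟨c, r, hr, M, hM⟩ := exists_ball_forall_exists_norm_le hfcl hfconv
    fun z => ⟨f z, mem_singleton_add_self h0K (f z)⟩
  refine (convexOn_comp_of_convex_gph h0K hψK hfconv).continuous_of_isBoundedUnder_le
    (z₀ := c) (isBoundedUnder_of_eventually_le (a := ‖ψ‖ * M) ?_)
  filter_upwards [ball_mem_nhds c hr] with z hz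
  obtain ⟨y, hy, hyM⟩ := hM z hz
  obtain ⟨k, hk, rfl⟩ : ∃ k ∈ K, f z + k = y := mem_singleton_add_iff.1 hy
  calc ψ (f z) ≤ ψ (f z + k) := by rw [map_add]; linarith [hψK k hk]
    _ ≤ ‖ψ‖ * ‖f z + k‖ := (le_abs_self _).trans (ψ.le_opNorm _)
    _ ≤ ‖ψ‖ * M := by gcongr

lemma coderiv_singleton_add_eq_subdiff (h0K : (0 : Y) ∈ K) (hψK : ∀ k ∈ K, 0 ≤ ψ k) (a : α) :
    coderiv (fun a => ({f a} : Set Y) + K) a (f a) ψ = subdiff (fun a => ψ (f a)) a := by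
  ext φ
  simp only [coderiv, subdiff, singleton_add, mem_image, mem_ofPred_eq, forall_exists_index,
    and_imp, forall_apply_eq_imp_iff₂, map_sub, map_add]
  refine ⟨fun h u => by simpa using h u 0 h0K, fun h u k hk => ?_⟩
  linarith [h u, hψK k hk]

end ConeConvexMaps

lemma mem_marginal_add_iff {P X Y : Type*} [Add Y] {K : Set Y} {f : P × X → Y} {C : P → Set X}
    {F : P → Set Y} (hF : ∀ p, F p = {y | ∃ x ∈ C p, y = f (p, x)}) {p : P} {y : Y} :
    y ∈ F p + K ↔ ∃ x ∈ C p, y ∈ ({f (p, x)} : Set Y) + K := by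
  rw [hF, Set.mem_add]
  constructor
  · rintro ⟨_, ⟨x, hx, rfl⟩, k, hk, rfl⟩
    exact ⟨x, hx, mem_singleton_add_iff.2 ⟨k, hk, rfl⟩⟩
  · rintro ⟨x, hx, hy⟩
    obtain ⟨k, hk, rfl⟩ := mem_singleton_add_iff.1 hy
    exact ⟨_, ⟨x, hx, rfl⟩, k, hk, rfl⟩

section MarginalMap

variable {P X Y : Type*} [NormedAddCommGroup P] [NormedSpace ℝ P]
  [NormedAddCommGroup X] [NormedSpace ℝ X] [NormedAddCommGroup Y] [NormedSpace ℝ Y]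
  {K : Set Y} {f : P × X → Y} {C : P → Set X} {F : P → Set Y}

lemma convex_gph_marginal_add (hF : ∀ p, F p = {y | ∃ x ∈ C p, y = f (p, x)})
    (hfconv : Convex ℝ (gph fun q => ({f q} : Set Y) + K)) (hCconv : Convex ℝ (gph C)) :
    Convex ℝ (gph fun p => F p + K) := by
  -- `gph (F + K)` is the image of `gph (f + K) ∩ (gph C × Y)` under `((p, x), y) ↦ (p, y)`.
  have : gph (fun p => F p + K) = LinearMap.prodMap (LinearMap.fst ℝ P X) LinearMap.id ''
      (gph (fun q => ({f q} : Set Y) + K) ∩ LinearMap.fst ℝ (P × X) Y ⁻¹' gph C) := by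
    ext ⟨p, y⟩
    simp only [gph, mem_ofPred_eq, mem_marginal_add_iff hF, mem_image, mem_inter_iff,
      mem_preimage, LinearMap.prodMap_apply, LinearMap.fst_apply, LinearMap.id_apply,
      Prod.exists, Prod.mk.injEq]
    constructor
    · rintro ⟨x, hx, hy⟩
      exact ⟨p, x, y, ⟨hy, hx⟩, rfl, rfl⟩
    · rintro ⟨_, x, _, ⟨hy, hx⟩, rfl, rfl⟩
      exact ⟨x, hx, hy⟩
  rw [this]
  exact (hfconv.inter (hCconv.linear_preimage _)).linear_image _

lemma coderiv_marginal_add [CompleteSpace P] [CompleteSpace X] [CompleteSpace Y]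
    (hF : ∀ p, F p = {y | ∃ x ∈ C p, y = f (p, x)}) (h0K : (0 : Y) ∈ K)
    (hfconv : Convex ℝ (gph fun q => ({f q} : Set Y) + K))
    (hfcl : IsClosed (gph fun q => ({f q} : Set Y) + K)) (hCconv : Convex ℝ (gph C))
    {pb : P} {xb : X} (hxb : xb ∈ C pb) (ψ : Y →L[ℝ] ℝ) :
    coderiv (fun p => F p + K) pb (f (pb, xb)) ψ
      = {w | ∃ pstar : P →L[ℝ] ℝ, ∃ xstar : X →L[ℝ] ℝ,
          pstar.coprod xstar ∈ coderiv (fun q => ({f q} : Set Y) + K) (pb, xb) (f (pb, xb)) ψ ∧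
          ∃ qstar ∈ coderiv C pb xb xstar, w = pstar + qstar} := by
  ext w
  constructor
  · intro hw
    have hψK := nonneg_of_mem_coderiv_add (H := F) (by rw [hF]; exact ⟨xb, hxb, rfl⟩) hw
    have hφ : ∀ z ∈ gph C, (w.comp (.fst ℝ P X)) (z - (pb, xb)) ≤ ψ (f z) - ψ (f (pb, xb)) := by
      intro z hz
      have hwz := hw z.1 (f z)
        ((mem_marginal_add_iff hF).2 ⟨z.2, hz, mem_singleton_add_self h0K _⟩)
      simp only [map_sub] at hwz ⊢
      simpa using hwz
    obtain ⟨ν, hν, hνC⟩ := exists_mem_subdiff_sub_mem_normal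
      (convexOn_comp_of_convex_gph h0K hψK hfconv)
      (continuous_comp_of_isClosed_gph h0K hψK hfconv hfcl) hCconv
      (show (pb, xb) ∈ gph C from hxb) _ hφ
    refine ⟨ν.comp (.inl ℝ P X), ν.comp (.inr ℝ P X), ?_, w - ν.comp (.inl ℝ P X),
      fun p x hx => ?_, by abel⟩
    · rwa [ContinuousLinearMap.coprod_comp_inl_inr, coderiv_singleton_add_eq_subdiff h0K hψK]
    · have hνpx := hνC (p, x) hx
      rw [sub_apply, ← ν.comp_inl_add_comp_inr] at hνpx
      simpa [sub_sub, add_assoc] using hνpx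
  · rintro ⟨pstar, xstar, hpx, qstar, hq, rfl⟩ u v hv
    obtain ⟨x, hx, hv⟩ := (mem_marginal_add_iff hF).1 hv
    have h₁ := hpx (u, x) v hv
    have h₂ := hq u x hx
    simp only [Prod.mk_sub_mk, ContinuousLinearMap.coprod_apply] at h₁
    simp only [add_apply]
    linarith

end MarginalMap

lemma Convex.add_subset_of_smul_mem {Y : Type*} [AddCommGroup Y] [Module ℝ Y] {K : Set Y}
    (hKconv : Convex ℝ K) (hKcone : ∀ t : ℝ, 0 ≤ t → ∀ y ∈ K, t • y ∈ K) : K + K ⊆ K := by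
  rintro _ ⟨k₁, hk₁, k₂, hk₂, rfl⟩
  have hmid := hKcone 2 zero_le_two _ (hKconv hk₁ hk₂ (by norm_num : (0 : ℝ) ≤ 1 / 2)
    (by norm_num : (0 : ℝ) ≤ 1 / 2) (by norm_num))
  simpa [smul_add, smul_smul] using hmid

lemma add_eventuallyEq_add_of_subset {ι G : Type*} [AddSemigroup G] {l : Filter ι} {K : Set G}
    {E F : ι → Set G} (hK : K + K ⊆ K) (hEF : ∀ p, E p ⊆ F p)
    (hFE : ∀ᶠ p in l, F p ⊆ E p + K) : (fun p => E p + K) =ᶠ[l] fun p => F p + K := by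
  filter_upwards [hFE] with p hp
  refine (add_subset_add_right (hEF p)).antisymm ?_
  calc F p + K ⊆ E p + K + K := add_subset_add_right hp
    _ = E p + (K + K) := add_assoc _ _ _
    _ ⊆ E p + K := add_subset_add_left hK

theorem stmt16_general
    {P X Y : Type*}
    [NormedAddCommGroup P] [NormedSpace ℝ P] [CompleteSpace P]
    [NormedAddCommGroup X] [NormedSpace ℝ X] [CompleteSpace X]
    [NormedAddCommGroup Y] [NormedSpace ℝ Y] [CompleteSpace Y]
    -- K is a pointed closed convex cone in Y
    (K : Set Y) (hKconv : Convex ℝ K)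
    (hKcone : ∀ t : ℝ, 0 ≤ t → ∀ y ∈ K, t • y ∈ K)
    (hKpointed : K ∩ (-K) = {0})
    -- f is K-convex and K-closed (its epigraph is convex and closed)
    (f : P × X → Y)
    (hfconv : Convex ℝ {q : (P × X) × Y | q.2 ∈ ({f q.1} : Set Y) + K})
    (hfcl : IsClosed {q : (P × X) × Y | q.2 ∈ ({f q.1} : Set Y) + K})
    -- C is a closed convex set-valued map
    (C : P → Set X) (hCconv : Convex ℝ (gph C))
    -- F(p) = {f(p,x) : x ∈ C(p)},  𝓟(p) = PrMin_K F(p)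
    (F : P → Set Y) (hF : ∀ p, F p = {y : Y | ∃ x ∈ C p, y = f (p, x)})
    (Fprop : P → Set Y)
    (hFprop : ∀ p, Fprop p = {a ∈ F p | ∃ Q : Set Y, Convex ℝ Q ∧
      (∀ t : ℝ, 0 ≤ t → ∀ y ∈ Q, t • y ∈ Q) ∧ Q ≠ univ ∧
      K \ {0} ⊆ interior Q ∧ (F p - {a}) ∩ ((-Q) \ (Q ∩ -Q)) = ∅})
    -- (pb, xb) ∈ gph S, yb = f(pb, xb)
    (pb : P) (xb : X) (hxbC : xb ∈ C pb)
    (yb : Y) (hyb : yb = f (pb, xb))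
    -- (iii) F is K-dominated by 𝓟 near pb
    (hdom : ∃ U ∈ nhds pb, ∀ p ∈ U, F p ⊆ Fprop p + K) :
    (∀ ψ : Y →L[ℝ] ℝ,
        fCoderiv (fun p => Fprop p + K) pb yb ψ
          = {w : P →L[ℝ] ℝ | ∃ pstar : P →L[ℝ] ℝ, ∃ xstar : X →L[ℝ] ℝ,
              pstar.coprod xstar
                ∈ coderiv (fun q : P × X => ({f q} : Set Y) + K) (pb, xb) (f (pb, xb)) ψ ∧
              ∃ qstar ∈ coderiv C pb xb xstar, w = pstar + qstar})
      ∧ (∀ ψ : Y →L[ℝ] ℝ, (∀ k ∈ K, 0 ≤ ψ k) →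
          fCoderiv (fun p => Fprop p + K) pb yb ψ
            = {w : P →L[ℝ] ℝ | ∃ pstar : P →L[ℝ] ℝ, ∃ xstar : X →L[ℝ] ℝ,
                pstar.coprod xstar ∈ subdiff (fun q : P × X => ψ (f q)) (pb, xb) ∧
                ∃ qstar ∈ coderiv C pb xb xstar, w = pstar + qstar}) := by
  subst hyb
  have h0K : (0 : Y) ∈ K := (hKpointed.symm ▸ mem_singleton 0 : (0 : Y) ∈ K ∩ -K).1
  obtain ⟨U, hU, hUdom⟩ := hdom
  have hloc : (fun p => Fprop p + K) =ᶠ[𝓝 pb] fun p => F p + K :=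
    add_eventuallyEq_add_of_subset (hKconv.add_subset_of_smul_mem hKcone)
      (fun p => by rw [hFprop p]; exact sep_subset _ _) (eventually_of_mem hU hUdom)
  have hmem : f (pb, xb) ∈ F pb + K :=
    (mem_marginal_add_iff hF).2 ⟨xb, hxbC, mem_singleton_add_self h0K _⟩
  have hcoderiv : ∀ ψ : Y →L[ℝ] ℝ, fCoderiv (fun p => Fprop p + K) pb (f (pb, xb)) ψ
      = coderiv (fun p => F p + K) pb (f (pb, xb)) ψ := fun ψ => by
    rw [fCoderiv_congr_of_eventuallyEq hloc,
      fCoderiv_eq_coderiv_of_convex (convex_gph_marginal_add hF hfconv hCconv) hmem]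
  have hmarginal := coderiv_marginal_add hF h0K hfconv hfcl hCconv hxbC
  refine ⟨fun ψ => (hcoderiv ψ).trans (hmarginal ψ), fun ψ hψ => ?_⟩
  rw [hcoderiv, hmarginal, coderiv_singleton_add_eq_subdiff h0K hψ]

/-- the proper (Henig) perturbation map version.  With
`𝓟(p) = PrMin_K F(p)` and `F` `K`-dominated by `𝓟` near `pb`, for every `y* ∈ Y*`:
`D̂*(𝓟 + K)(pb, yb)(y*) = ⋃_{(p*,x*) ∈ D*(f + K)(pb, xb)(y*)} {p* + D*C(pb, xb)(x*)}`;
in particular, for every `y* ∈ K*` the union can be taken over `∂⟨y*, f⟩(pb, xb)`. -/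
theorem stmt16
    {P X Y : Type*}
    [NormedAddCommGroup P] [NormedSpace ℝ P] [CompleteSpace P]
    [NormedAddCommGroup X] [NormedSpace ℝ X] [CompleteSpace X]
    [NormedAddCommGroup Y] [NormedSpace ℝ Y] [CompleteSpace Y]
    -- K is a pointed closed convex cone in Y
    (K : Set Y) (hKconv : Convex ℝ K) (hKclosed : IsClosed K)
    (hKcone : ∀ t : ℝ, 0 ≤ t → ∀ y ∈ K, t • y ∈ K)
    (hKpointed : K ∩ (-K) = {0})
    -- f is K-convex and K-closed (its epigraph is convex and closed)
    (f : P × X → Y)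
    (hfconv : Convex ℝ {q : (P × X) × Y | q.2 ∈ ({f q.1} : Set Y) + K})
    (hfcl : IsClosed {q : (P × X) × Y | q.2 ∈ ({f q.1} : Set Y) + K})
    -- C is a closed convex set-valued map
    (C : P → Set X) (hCconv : Convex ℝ (gph C)) (hCcl : IsClosed (gph C))
    -- F(p) = {f(p,x) : x ∈ C(p)},  𝓟(p) = PrMin_K F(p)
    (F : P → Set Y) (hF : ∀ p, F p = {y : Y | ∃ x ∈ C p, y = f (p, x)})
    (Fprop : P → Set Y)
    (hFprop : ∀ p, Fprop p = {a ∈ F p | ∃ Q : Set Y, Convex ℝ Q ∧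
      (∀ t : ℝ, 0 ≤ t → ∀ y ∈ Q, t • y ∈ Q) ∧ Q ≠ univ ∧
      K \ {0} ⊆ interior Q ∧ (F p - {a}) ∩ ((-Q) \ (Q ∩ -Q)) = ∅})
    -- (pb, xb) ∈ gph S, yb = f(pb, xb)
    (pb : P) (xb : X) (hxbC : xb ∈ C pb) (hsol : f (pb, xb) ∈ Fprop pb)
    (yb : Y) (hyb : yb = f (pb, xb))
    -- (i) ℝ⁺(rge H − dom f) is a closed linear subspace of P × X, where
    --     H(p) = {p} × C(p), so rge H = gph C and dom f = P × X
    (hqual1 : ∃ S : Submodule ℝ (P × X), IsClosed (S : Set (P × X)) ∧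
      {w : P × X | ∃ t : ℝ, 0 ≤ t ∧
        ∃ u ∈ ⋃ p : P, ({p} : Set P) ×ˢ C p, ∃ v : P × X, w = t • (u - v)} = S)
    -- (ii) ℝ⁺(P − dom C) is a closed linear subspace of P
    (hqual2 : ∃ S : Submodule ℝ P, IsClosed (S : Set P) ∧
      {w : P | ∃ t : ℝ, 0 ≤ t ∧ ∃ u : P, ∃ v ∈ dom C, w = t • (u - v)} = S)
    -- (iii) F is K-dominated by 𝓟 near pb
    (hdom : ∃ U ∈ nhds pb, ∀ p ∈ U, F p ⊆ Fprop p + K) :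
    (∀ ψ : Y →L[ℝ] ℝ,
        fCoderiv (fun p => Fprop p + K) pb yb ψ
          = {w : P →L[ℝ] ℝ | ∃ pstar : P →L[ℝ] ℝ, ∃ xstar : X →L[ℝ] ℝ,
              pstar.coprod xstar
                ∈ coderiv (fun q : P × X => ({f q} : Set Y) + K) (pb, xb) (f (pb, xb)) ψ ∧
              ∃ qstar ∈ coderiv C pb xb xstar, w = pstar + qstar})
      ∧ (∀ ψ : Y →L[ℝ] ℝ, (∀ k ∈ K, 0 ≤ ψ k) →
          fCoderiv (fun p => Fprop p + K) pb yb ψ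
            = {w : P →L[ℝ] ℝ | ∃ pstar : P →L[ℝ] ℝ, ∃ xstar : X →L[ℝ] ℝ,
                pstar.coprod xstar ∈ subdiff (fun q : P × X => ψ (f q)) (pb, xb) ∧
                ∃ qstar ∈ coderiv C pb xb xstar, w = pstar + qstar}) :=
  stmt16_general K hKconv hKcone hKpointed f hfconv hfcl C hCconv F hF Fprop hFprop pb xb hxbC yb
    hyb hdom
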